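/- Let (L, ≤) be an infinite linearly ordered set and κ : L → {♯₁, ♯₂} a coloring into two colors. Suppose there is a natural number n such that L contains no increasing sequence a_1 < a_2 < ... < a_{2(n+1)} with κ(a_{2i+1}) = ♯₁ and κ(a_{2i+2}) = ♯₂ for all i ≤ n. Then L can be partitioned into finitely many intervals L_1 ≺ L_2 ≺ ... ≺ L_m such that each L_i is monochromatic. -/
import Mathlib


inductive Color2 where
  | sharp1 | sharp2
deriving DecidableEq

lemma Color2.eq_sharp2 {c : Color2} (h : c ≠ Color2.sharp1) : c = Color2.sharp2 := by
  cases c <;> simp_all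

lemma Color2.eq_sharp1 {c : Color2} (h : c ≠ Color2.sharp2) : c = Color2.sharp1 := by
  cases c <;> simp_all

/-- An infinite linear order colored by two colors that admits no long
alternating `♯₁,♯₂` pattern decomposes into finitely many consecutive intervals
(the fibers of a monotone map onto `Fin (m+1)`), each monochromatic. -/
theorem stmt1 {L : Type*} [LinearOrder L] [Infinite L] (κ : L → Color2)
    (h : ∃ n : ℕ, ¬ ∃ a : ℕ → L,
      (∀ i j : ℕ, i < j → j < 2 * (n + 1) → a i < a j) ∧
      (∀ i ≤ n, κ (a (2 * i)) = Color2.sharp1 ∧ κ (a (2 * i + 1)) = Color2.sharp2)) :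
    ∃ (m : ℕ) (f : L → Fin (m + 1)), Monotone f ∧
      ∀ i : Fin (m + 1), (κ '' (f ⁻¹' {i})).ncard ≤ 1 := by
  obtain ⟨n, hn⟩ := h
  -- Pat x k : there is an alternating-color strictly increasing chain of length k ending at x
  set Pat : L → ℕ → Prop := fun x k =>
    ∃ a : ℕ → L, a k = x ∧ ∀ i < k, a i < a (i + 1) ∧ κ (a i) ≠ κ (a (i + 1)) with hPat
  -- suffix closure
  have hsuf : ∀ x k j, Pat x k → j ≤ k → Pat x j := by
    rintro x k j ⟨a, hak, ha⟩ hjk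
    refine ⟨fun i => a (i + (k - j)), ?_, ?_⟩
    · show a (j + (k - j)) = x
      rw [show j + (k - j) = k from by omega, hak]
    · intro i hi
      have key := ha (i + (k - j)) (by omega)
      show a (i + (k - j)) < a (i + 1 + (k - j)) ∧
        κ (a (i + (k - j))) ≠ κ (a (i + 1 + (k - j)))
      rw [show i + 1 + (k - j) = i + (k - j) + 1 from by omega]
      exact key
  -- chains are strictly monotone on their range
  have hmono : ∀ (a : ℕ → L) (k : ℕ), (∀ i < k, a i < a (i + 1)) →
      ∀ i j, i < j → j ≤ k → a i < a j := by
    intro a k ha i j hij hjk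
    induction j with
    | zero => omega
    | succ j ih =>
      rcases Nat.lt_or_ge i j with hij' | hij'
      · exact (ih hij' (by omega)).trans (ha j (by omega))
      · have : i = j := by omega
        subst this; exact ha i (by omega)
  -- no chain of length 2n+2
  have hbound : ∀ x, ¬ Pat x (2 * n + 2) := by
    rintro x ⟨a, hak, ha⟩
    -- pick starting index s with κ (a s) = sharp1, s + 2n+1 ≤ 2n+2
    obtain ⟨s, hs1, hsle⟩ : ∃ s, κ (a s) = Color2.sharp1 ∧ s + (2 * n + 1) ≤ 2 * n + 2 := by
      by_cases h0 : κ (a 0) = Color2.sharp1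
      · exact ⟨0, h0, by omega⟩
      · refine ⟨1, ?_, by omega⟩
        have := (ha 0 (by omega)).2
        have h0' := Color2.eq_sharp2 h0
        exact Color2.eq_sharp1 (by rw [h0'] at this; simpa using this.symm)
    apply hn
    refine ⟨fun i => a (s + i), ?_, ?_⟩
    · intro i j hij hj
      exact hmono a (2 * n + 2) (fun i hi => (ha i hi).1) (s + i) (s + j) (by omega) (by omega)
    · intro i hi
      induction i with
      | zero =>
        refine ⟨by simpa using hs1, ?_⟩
        have := (ha s (by omega)).2
        rw [hs1] at this
        have : κ (a (s + 1)) = Color2.sharp2 := Color2.eq_sharp2 (fun hc => this (by rw [hc]))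
        simpa using this
      | succ i ih =>
        obtain ⟨ih1, ih2⟩ := ih (by omega)
        have ih2' : κ (a (s + (2 * i + 1))) = Color2.sharp2 := ih2
        have e1 := (ha (s + (2 * i + 1)) (by omega)).2
        rw [show s + (2 * i + 1) + 1 = s + 2 * (i + 1) from by ring, ih2'] at e1
        have c1 : κ (a (s + 2 * (i + 1))) = Color2.sharp1 :=
          Color2.eq_sharp1 (fun hc => e1 (by rw [hc]))
        refine ⟨c1, ?_⟩
        have e2 := (ha (s + 2 * (i + 1)) (by omega)).2
        rw [c1] at e2
        have c2 : κ (a (s + 2 * (i + 1) + 1)) = Color2.sharp2 :=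
          Color2.eq_sharp2 (fun hc => e2 (by rw [hc]))
        show κ (a (s + (2 * (i + 1) + 1))) = Color2.sharp2
        rwa [show s + 2 * (i + 1) + 1 = s + (2 * (i + 1) + 1) from by ring] at c2
  have h0 : ∀ x, Pat x 0 := fun x => ⟨fun _ => x, rfl, by omega⟩
  have hle : ∀ x k, Pat x k → k ≤ 2 * n + 1 := by
    intro x k hk
    by_contra hc
    exact hbound x (hsuf x k (2 * n + 2) hk (by omega))
  set f : L → ℕ := fun x => sSup {k | Pat x k} with hf
  have hfmem : ∀ x, Pat x (f x) :=
    fun x => Nat.sSup_mem ⟨0, h0 x⟩ ⟨2 * n + 1, fun k hk => hle x k hk⟩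
  have hfle : ∀ x, f x ≤ 2 * n + 1 := fun x => hle x (f x) (hfmem x)
  have hfub : ∀ x k, Pat x k → k ≤ f x :=
    fun x k hk => le_csSup ⟨2 * n + 1, fun j hj => hle x j hj⟩ hk
  -- extension lemmas
  have hext : ∀ x y, x < y → κ x ≠ κ y → ∀ k, Pat x k → Pat y (k + 1) := by
    rintro x y hxy hκ k ⟨a, hak, ha⟩
    refine ⟨fun i => if i ≤ k then a i else y, ?_, ?_⟩
    · show (if k + 1 ≤ k then a (k + 1) else y) = y
      rw [if_neg (by omega)]
    · intro i hi
      show (if i ≤ k then a i else y) < (if i + 1 ≤ k then a (i + 1) else y) ∧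
        κ (if i ≤ k then a i else y) ≠ κ (if i + 1 ≤ k then a (i + 1) else y)
      rcases Nat.lt_or_ge i k with hik | hik
      · rw [if_pos (by omega : i ≤ k), if_pos (by omega : i + 1 ≤ k)]
        exact ha i hik
      · have hik' : i = k := by omega
        subst hik'
        rw [if_pos le_rfl, if_neg (by omega), hak]
        exact ⟨hxy, hκ⟩
  have hrep : ∀ x y, x < y → κ x = κ y → ∀ k, Pat x k → Pat y k := by
    rintro x y hxy hκ k ⟨a, hak, ha⟩
    rcases Nat.eq_zero_or_pos k with rfl | hk
    · exact h0 y
    refine ⟨fun i => if i = k then y else a i, ?_, ?_⟩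
    · show (if k = k then y else a k) = y
      rw [if_pos rfl]
    · intro i hi
      show (if i = k then y else a i) < (if i + 1 = k then y else a (i + 1)) ∧
        κ (if i = k then y else a i) ≠ κ (if i + 1 = k then y else a (i + 1))
      rcases Nat.lt_or_ge (i + 1) k with hik | hik
      · rw [if_neg (by omega : ¬ i = k), if_neg (by omega : ¬ i + 1 = k)]
        exact ha i hi
      · have hik' : i + 1 = k := by omega
        rw [if_neg (by omega : ¬ i = k), if_pos hik']
        have h1 := ha i hi
        rw [hik', hak] at h1
        exact ⟨h1.1.trans hxy, by rw [← hκ]; exact h1.2⟩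
  -- f is monotone (as ℕ-valued)
  have hfmono : ∀ x y, x < y → f x ≤ f y := by
    intro x y hxy
    by_cases hκ : κ x = κ y
    · exact hfub y (f x) (hrep x y hxy hκ (f x) (hfmem x))
    · exact le_trans (by omega) (hfub y (f x + 1) (hext x y hxy hκ (f x) (hfmem x)))
  -- strict color difference forces strict increase
  have hfstrict : ∀ x y, x < y → κ x ≠ κ y → f x < f y := by
    intro x y hxy hκ
    exact lt_of_lt_of_le (Nat.lt_succ_self _) (hfub y (f x + 1) (hext x y hxy hκ (f x) (hfmem x)))
  refine ⟨2 * n + 1, fun x => ⟨f x, by have := hfle x; omega⟩, ?_, ?_⟩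
  · intro x y hxy
    rcases eq_or_lt_of_le hxy with rfl | hlt
    · exact le_refl _
    · exact Fin.mk_le_mk.mpr (hfmono x y hlt)
  · intro i
    have hsub : ∀ x ∈ (fun x => (⟨f x, by have := hfle x; omega⟩ : Fin (2*n+1+1))) ⁻¹' {i},
        ∀ y ∈ (fun x => (⟨f x, by have := hfle x; omega⟩ : Fin (2*n+1+1))) ⁻¹' {i},
        κ x = κ y := by
      intro x hx y hy
      simp only [Set.mem_preimage, Set.mem_singleton_iff] at hx hy
      have hfeq : f x = f y := by
        have := hx.trans hy.symm
        exact Fin.mk.inj_iff.mp this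
      by_contra hκ
      rcases lt_trichotomy x y with hlt | rfl | hlt
      · exact absurd hfeq (Nat.ne_of_lt (hfstrict x y hlt hκ))
      · exact hκ rfl
      · exact absurd hfeq.symm (Nat.ne_of_lt (hfstrict y x hlt (Ne.symm hκ)))
    have hss : (κ '' ((fun x => (⟨f x, by have := hfle x; omega⟩ : Fin (2*n+1+1))) ⁻¹' {i})).Subsingleton := by
      rintro c ⟨x, hx, rfl⟩ d ⟨y, hy, rfl⟩
      exact hsub x hx y hy
    exact (Set.ncard_le_one hss.finite).mpr fun a ha b hb => hss ha hb
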